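/- arXiv:1701.07630 — 2 statements merged into one kernel-verified Lean document; each statement's English description precedes it below -/
import Mathlib

section
/- Let R = A × B where A is a finite commutative nil clean ring and B is a finite commutative weak nil clean ring with no nontrivial idempotents. Then {(1,1), (2,2)} is a dominating set for the nil clean graph G_N(A × B). -/
def IsNilClean {R : Type*} [CommRing R] (r : R) : Prop :=
  ∃ n e : R, IsNilpotent n ∧ IsIdempotentElem e ∧ r = n + e

def nilCleanGraph (R : Type*) [CommRing R] : SimpleGraph R where
  Adj x y := x ≠ y ∧ IsNilClean (x + y)
  symm := by
    constructor
    rintro x y ⟨hxy, n, e, hn, he, h⟩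
    exact ⟨hxy.symm, n, e, hn, he, by rwa [add_comm]⟩
  loopless := by constructor; rintro x ⟨h, -⟩; exact h rfl

/-!
A pair of nil clean elements is nil clean in `A × B`, and every element of `A` is nil clean,
so everything happens in `B`. There each element `b` lies in `N`, `N + 1` or
`N - 1` for the nilradical `N`, because its idempotent is `0` or `1`. Writing `3` this way shows
that `2` or `3` is nilpotent, and then `b + 1` or `b + 2` lies in `N` or `N + 1`.
-/

theorem IsNilpotent.prodMk {A B : Type*} [MonoidWithZero A] [MonoidWithZero B] {a : A} {b : B}
    (ha : IsNilpotent a) (hb : IsNilpotent b) : IsNilpotent (a, b) := by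
  obtain ⟨k, hk⟩ := ha
  obtain ⟨l, hl⟩ := hb
  exact ⟨max k l, Prod.ext (pow_eq_zero_of_le (le_max_left k l) hk)
    (pow_eq_zero_of_le (le_max_right k l) hl)⟩

theorem IsNilClean.prodMk {A B : Type*} [CommRing A] [CommRing B] {a : A} {b : B}
    (ha : IsNilClean a) (hb : IsNilClean b) : IsNilClean (a, b) := by
  obtain ⟨n, e, hn, he, rfl⟩ := ha
  obtain ⟨m, f, hm, hf, rfl⟩ := hb
  exact ⟨(n, m), (e, f), hn.prodMk hm, Prod.ext he hf, rfl⟩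

section Nilpotent

variable {R : Type*} [CommRing R] {n : R}

theorem IsNilpotent.isNilClean (hn : IsNilpotent n) : IsNilClean n :=
  ⟨n, 0, hn, .zero, (add_zero n).symm⟩

theorem IsNilpotent.isNilClean_add_one (hn : IsNilpotent n) : IsNilClean (n + 1) :=
  ⟨n, 1, hn, .one, rfl⟩

end Nilpotent

section TrivialIdempotents

variable {B : Type*} [CommRing B]

theorem isNilpotent_or_sub_one_or_add_one
    (hB : ∀ b : B, ∃ n e : B, IsNilpotent n ∧ IsIdempotentElem e ∧ (b = n + e ∨ b = n - e))
    (hidB : ∀ e : B, IsIdempotentElem e → e = 0 ∨ e = 1) (b : B) :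
    IsNilpotent b ∨ IsNilpotent (b - 1) ∨ IsNilpotent (b + 1) := by
  obtain ⟨n, e, hn, he, hb | hb⟩ := hB b <;> rcases hidB e he with rfl | rfl
  · exact .inl (by simpa [hb] using hn)
  · exact .inr <| .inl (by simpa [hb] using hn)
  · exact .inl (by simpa [hb] using hn)
  · exact .inr <| .inr (by simpa [hb] using hn)

theorem isNilpotent_two_or_three
    (hB : ∀ b : B, IsNilpotent b ∨ IsNilpotent (b - 1) ∨ IsNilpotent (b + 1)) :
    IsNilpotent (2 : B) ∨ IsNilpotent (3 : B) := by
  rcases hB 3 with h3 | h2 | h4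
  · exact .inr h3
  · exact .inl (by norm_num at h2; exact h2)
  · refine .inl ((IsNilpotent.pow_iff_pos two_ne_zero).mp ?_)
    norm_num at h4 ⊢
    exact h4

theorem isNilClean_add_one_or_add_two
    (hB : ∀ b : B, IsNilpotent b ∨ IsNilpotent (b - 1) ∨ IsNilpotent (b + 1)) (b : B) : IsNilClean (b + 1) ∨ IsNilClean (b + 2) := by
  rcases hB b with hb | hb | hb
  · exact .inl hb.isNilClean_add_one
  · have hnil (c : B) (hc : IsNilpotent c) : IsNilpotent (b - 1 + c) :=
      Commute.isNilpotent_add (.all _ _) hb hc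
    rcases isNilpotent_two_or_three hB with h2 | h3
    · exact .inl (by convert (hnil 2 h2).isNilClean using 1; ring)
    · exact .inr (by convert (hnil 3 h3).isNilClean using 1; ring)
  · exact .inl hb.isNilClean

end TrivialIdempotents

theorem stmt13_general (A B : Type*) [CommRing A] [CommRing B]
    (hA : ∀ a : A, IsNilClean a)
    (hB : ∀ b : B, ∃ n e : B, IsNilpotent n ∧ IsIdempotentElem e ∧
      (b = n + e ∨ b = n - e))
    (hidB : ∀ e : B, IsIdempotentElem e → e = 0 ∨ e = 1) :
    ∀ x : A × B, x = (1, 1) ∨ x = (2, 2) ∨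
      (nilCleanGraph (A × B)).Adj x (1, 1) ∨ (nilCleanGraph (A × B)).Adj x (2, 2) := by
  rintro ⟨a, b⟩
  rcases isNilClean_add_one_or_add_two (isNilpotent_or_sub_one_or_add_one hB hidB) b with hb | hb
  · by_cases h : ((a, b) : A × B) = (1, 1)
    · exact .inl h
    · exact .inr <| .inr <| .inl ⟨h, (hA (a + 1)).prodMk hb⟩
  · by_cases h : ((a, b) : A × B) = (2, 2)
    · exact .inr <| .inl h
    · exact .inr <| .inr <| .inr ⟨h, (hA (a + 2)).prodMk hb⟩

theorem stmt13 (A B : Type*) [CommRing A] [Fintype A] [CommRing B] [Fintype B]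
    (hA : ∀ a : A, IsNilClean a)
    (hB : ∀ b : B, ∃ n e : B, IsNilpotent n ∧ IsIdempotentElem e ∧
      (b = n + e ∨ b = n - e))
    (hidB : ∀ e : B, IsIdempotentElem e → e = 0 ∨ e = 1) :
    ∀ x : A × B, x = (1, 1) ∨ x = (2, 2) ∨
      (nilCleanGraph (A × B)).Adj x (1, 1) ∨ (nilCleanGraph (A × B)).Adj x (2, 2) :=
  stmt13_general A B hA hB hidB
end

section
/- Let R be a finite commutative ring that is weak nil clean but not nil clean, and whose only idempotents are 0 and 1. Then the diameter of the nil clean graph G_N(R) equals 2. -/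
section

variable {R : Type*} [CommRing R]

lemma isNilClean_zero : IsNilClean (0 : R) :=
  ⟨0, 0, IsNilpotent.zero, IsIdempotentElem.zero, by simp⟩

lemma isNilClean_one : IsNilClean (1 : R) :=
  ⟨0, 1, IsNilpotent.zero, IsIdempotentElem.one, by simp⟩

lemma isNilClean_or_isNilClean_add_one {r n e : R} (hn : IsNilpotent n)
    (he : IsIdempotentElem e) (hr : r = n + e ∨ r = n - e) :
    IsNilClean r ∨ IsNilClean (r + 1) := by
  rcases hr with rfl | rfl
  · exact .inl ⟨n, e, hn, he, rfl⟩
  · exact .inr ⟨n, 1 - e, hn, he.one_sub, by ring⟩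

namespace nilCleanGraph

lemma edist_le_one {x y : R} (h : IsNilClean (x + y)) : (nilCleanGraph R).edist x y ≤ 1 := by
  rcases eq_or_ne x y with rfl | hxy
  · simp
  · exact (SimpleGraph.edist_eq_one_iff_adj.mpr (show (nilCleanGraph R).Adj x y from ⟨hxy, h⟩)).le

lemma edist_le_two {x y : R} (h : IsNilClean (y - x) ∨ IsNilClean (y - x + 1)) :
    (nilCleanGraph R).edist x y ≤ 2 := by
  obtain ⟨z, hxz, hzy⟩ : ∃ z, IsNilClean (x + z) ∧ IsNilClean (z + y) := by
    rcases h with h | h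
    · exact ⟨-x, by simpa using isNilClean_zero, by rwa [neg_add_eq_sub]⟩
    · exact ⟨1 - x, by simpa using isNilClean_one, by convert h using 1; ring⟩
  calc (nilCleanGraph R).edist x y
      ≤ (nilCleanGraph R).edist x z + (nilCleanGraph R).edist z y := SimpleGraph.edist_triangle
    _ ≤ 1 + 1 := add_le_add (edist_le_one hxz) (edist_le_one hzy)
    _ = 2 := one_add_one_eq_two

lemma two_le_edist_zero {r : R} (hr : ¬ IsNilClean r) : 2 ≤ (nilCleanGraph R).edist 0 r := by
  have h_far : ¬ (nilCleanGraph R).edist 0 r ≤ 1 := by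
    rw [SimpleGraph.edist_le_one_iff_adj_or_eq]
    rintro (⟨-, h⟩ | rfl)
    · exact hr (by simpa using h)
    · exact hr isNilClean_zero
  rw [← one_add_one_eq_two]
  exact Order.add_one_le_of_lt (not_le.mp h_far)

end nilCleanGraph

end

theorem stmt18_general (R : Type*) [CommRing R]
    (hwnc : ∀ r : R, ∃ n e : R, IsNilpotent n ∧ IsIdempotentElem e ∧
      (r = n + e ∨ r = n - e))
    (hnc : ¬ ∀ r : R, IsNilClean r) :
    (nilCleanGraph R).diam = 2 := by
  have h_le : (nilCleanGraph R).ediam ≤ 2 := by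
    refine SimpleGraph.ediam_le_iff.mpr fun x y => nilCleanGraph.edist_le_two ?_
    obtain ⟨n, e, hn, he, h⟩ := hwnc (y - x)
    exact isNilClean_or_isNilClean_add_one hn he h
  obtain ⟨r, hr⟩ := not_forall.mp hnc
  have h_ge : 2 ≤ (nilCleanGraph R).ediam :=
    (nilCleanGraph.two_le_edist_zero hr).trans SimpleGraph.edist_le_ediam
  rw [SimpleGraph.diam, le_antisymm h_le h_ge]
  rfl

theorem stmt18 (R : Type*) [CommRing R] [Fintype R]
    (hwnc : ∀ r : R, ∃ n e : R, IsNilpotent n ∧ IsIdempotentElem e ∧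
      (r = n + e ∨ r = n - e))
    (hnc : ¬ ∀ r : R, IsNilClean r)
    (hid : ∀ e : R, IsIdempotentElem e → e = 0 ∨ e = 1) :
    (nilCleanGraph R).diam = 2 :=
  stmt18_general R hwnc hnc
end
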